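/- Let d ≥ 1 and let C be a 2d×2d real matrix with zero diagonal, all off-diagonal entries equal to ±1, Cᵀ = −C, and C·Cᵀ = (2d−1)·I (a skew-symmetric conference matrix). Then the Hermitian matrix A = I + (i/√(2d−1))·C is positive semidefinite of rank d, and whenever x₁,…,x_{2d} ∈ ℂ^d are vectors with x_j^*x_k = A_{jk} for all j,k (so each x_j ∈ Ω(d)), the 4d vectors ±x₁,…,±x_{2d} are pairwise distinct and the set X = {x₁,…,x_{2d}} ∪ {−x₁,…,−x_{2d}} is a complex spherical 𝒯-design for 𝒯 = {(k,l) ∈ ℕ×ℕ : k+l ≤ 3}, with inner product set A(X) = {i/√(2d−1), −i/√(2d−1), −1} of cardinality 3. -/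

import Mathlib

open Finset Matrix
open scoped ComplexOrder

/-- The Hermitian inner product `x^* y = ∑ i, conj (x i) * y i` on `ℂ^d`. -/
noncomputable def cInner {d : ℕ} (x y : Fin d → ℂ) : ℂ :=
  ∑ i, (starRingEnd ℂ) (x i) * y i

/-- A lower set in `ℕ × ℕ` with respect to the product order. -/
def IsLowerSet' (T : Finset (ℕ × ℕ)) : Prop :=
  ∀ kl ∈ T, ∀ mn : ℕ × ℕ, mn.1 ≤ kl.1 → mn.2 ≤ kl.2 → mn ∈ T

/-- The average over the unit sphere `Ω(d)` of the monomial
`z ↦ ∏ i, z i ^ a i * conj (z i) ^ b i`. -/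
noncomputable def monomialAvg (d : ℕ) (a b : Fin d → ℕ) : ℂ :=
  if a = b then
    ((Nat.factorial (d - 1) : ℂ) * ∏ i, (Nat.factorial (a i) : ℂ)) /
      (Nat.factorial (d + (∑ i, a i) - 1) : ℂ)
  else 0

/-- `X` is a complex spherical `T`-design: every monomial of bidegree `(k,l) ∈ T`
has the same average over `X` as over the sphere `Ω(d)`. -/
def IsDesign (d : ℕ) (X : Finset (Fin d → ℂ)) (T : Finset (ℕ × ℕ)) : Prop :=
  ∀ kl ∈ T, ∀ a b : Fin d → ℕ, (∑ i, a i) = kl.1 → (∑ i, b i) = kl.2 →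
    (∑ z ∈ X, (∏ i, (z i) ^ (a i)) * ∏ i, ((starRingEnd ℂ) (z i)) ^ (b i))
      = (X.card : ℂ) * monomialAvg d a b

/-- The Jacobi polynomial `g_{k,l}` for the complex sphere in dimension `d`. -/
noncomputable def jacobi (d k l : ℕ) (x : ℂ) : ℂ :=
  (((d + k + l - 1 : ℕ) : ℂ) / (Nat.factorial (d - 1) : ℂ)) *
    ∑ r ∈ Finset.range (min k l + 1),
      (((-1 : ℂ) ^ r * (Nat.factorial (d + k + l - r - 2) : ℂ)) /
          ((Nat.factorial r : ℂ) * (Nat.factorial (k - r) : ℂ) *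
            (Nat.factorial (l - r) : ℂ))) *
        x ^ (k - r) * ((starRingEnd ℂ) x) ^ (l - r)

open scoped Classical in
/-- The inner product set `A(X) = {x^* y : x, y ∈ X, x ≠ y}`. -/
noncomputable def innerSet {d : ℕ} (X : Finset (Fin d → ℂ)) : Finset ℂ :=
  ((X ×ˢ X).filter fun p => p.1 ≠ p.2).image fun p => cInner p.1 p.2

/-- `m_{k,l}`, the dimension of the harmonic space `Harm(k,l)` in dimension `d`. -/
def mdim (d k l : ℕ) : ℕ :=
  (d + k - 1).choose (d - 1) * (d + l - 1).choose (d - 1) -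
    (d + k - 2).choose (d - 1) * (d + l - 2).choose (d - 1)

/-- The convolution `U * V = {(k + l', k' + l) : (k,l) ∈ U, (k',l') ∈ V}`. -/
def convSet (U V : Finset (ℕ × ℕ)) : Finset (ℕ × ℕ) :=
  (U ×ˢ V).image fun p => (p.1.1 + p.2.2, p.2.1 + p.1.2)

/-- `X` is an `S`-code: it has an annihilator polynomial supported on monomials
`x^k * conj x^l` with `(k,l) ∈ S`. -/
def IsCode (d : ℕ) (X : Finset (Fin d → ℂ)) (S : Finset (ℕ × ℕ)) : Prop :=
  ∃ c : ℕ × ℕ → ℝ,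
    (∀ α ∈ innerSet X, ∑ kl ∈ S, (c kl : ℂ) * α ^ kl.1 * ((starRingEnd ℂ) α) ^ kl.2 = 0) ∧
    0 < ∑ kl ∈ S, c kl

open scoped Classical

/-- The Hermitian matrix `A = I + (i/√(2d−1))·C` built from a real matrix `C`. -/
noncomputable def confGram (d : ℕ) (C : Matrix (Fin (2 * d)) (Fin (2 * d)) ℝ) :
    Matrix (Fin (2 * d)) (Fin (2 * d)) ℂ :=
  1 + (Complex.I / (Real.sqrt (2 * (d : ℝ) - 1) : ℂ)) • C.map (fun r => (r : ℂ))

/-!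
With `c = i/√(2d-1)` and `N = c • C`, the conference identities `C² = -(2d-1)` and `Cᵀ = -C`
give `N² = 1` and `Nᵀ = -N`, so `A = 1 + N` satisfies `A² = 2A` and `A Aᵀ = 0`. The first makes
`A/2` a Hermitian idempotent of trace `d`, hence `A ⪰ 0` of rank `d`. For a Gram realization
with row matrix `P` (so `P Pᴴ = Aᵀ`), trace computations turn these two identities into the
frame identities `∑ x_j x_j^* = 2` and `∑ x_j x_jᵀ = 0`. Over the antipodal set `±x_j`
monomials of odd bidegree cancel, and those of bidegree `(0,0), (1,1), (2,0), (0,2)` average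
correctly by the frame identities. Distinct `±x_j` have inner product `-1` (antipodes) or `±c`;
none of these is `1`, so the `4d` vectors are distinct.
-/

namespace Matrix

variable {m n 𝕜 : Type*} [Fintype m] [Fintype n]

theorem rank_eq_trace_of_isIdempotentElem {K : Type*} [Field K] [CharZero K] [DecidableEq n]
    {E : Matrix n n K} (hE : IsIdempotentElem E) : (E.rank : K) = E.trace := by
  have hlin : IsIdempotentElem (toLin' E) := by
    rw [IsIdempotentElem, Module.End.mul_eq_comp, ← toLin'_mul, hE.eq]
  rw [← trace_toLin'_eq, (LinearMap.IsIdempotentElem.isProj_range _ hlin).trace, rank,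
    toLin'_apply']

variable [RCLike 𝕜]

theorem conjTranspose_mul_self_eq_smul_one {P : Matrix m n 𝕜} {r : ℝ}
    (hsq : P * Pᴴ * (P * Pᴴ) = (r : 𝕜) • (P * Pᴴ))
    (htr : (P * Pᴴ).trace = r * Fintype.card n) :
    Pᴴ * P = (r : 𝕜) • 1 := by
  -- `R := PᴴP - r` is Hermitian with `tr (R²) = tr ((PPᴴ)²) - 2r tr (PPᴴ) + r² |n| = 0`.
  set R := Pᴴ * P - (r : 𝕜) • 1
  have hR : Rᴴ = R := by simp [R, conjTranspose_sub, conjTranspose_smul]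
  have hcyc : (Pᴴ * P * (Pᴴ * P)).trace = (P * Pᴴ * (P * Pᴴ)).trace := by
    simp only [Matrix.mul_assoc]
    rw [trace_mul_comm]
    simp only [Matrix.mul_assoc]
  have htr0 : (Rᴴ * R).trace = 0 := by
    rw [hR]
    simp only [R, sub_mul, mul_sub, Matrix.smul_mul, Matrix.mul_smul, Matrix.one_mul,
      Matrix.mul_one, trace_sub, trace_smul, hcyc, hsq, trace_mul_comm Pᴴ P, htr, trace_one,
      smul_eq_mul]
    ring
  exact sub_eq_zero.mp (trace_conjTranspose_mul_self_eq_zero_iff.mp htr0)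

theorem transpose_mul_self_eq_zero {P : Matrix m n 𝕜} (h : (P * Pᴴ)ᵀ * (P * Pᴴ) = 0) :
    Pᵀ * P = 0 := by
  refine trace_conjTranspose_mul_self_eq_zero_iff.mp ?_
  have hcyc : (Pᵀ * P)ᴴ * (Pᵀ * P) = Pᴴ * ((P * Pᴴ)ᵀ * P) := by
    rw [conjTranspose_mul, transpose_mul, conjTranspose_transpose_eq_transpose_conjTranspose]
    simp only [Matrix.mul_assoc]
  rw [hcyc, trace_mul_comm, Matrix.mul_assoc, h, trace_zero]

end Matrix

lemma cInner_neg_left {d : ℕ} (x y : Fin d → ℂ) : cInner (-x) y = -cInner x y := by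
  simp [cInner, ← Finset.sum_neg_distrib]

lemma cInner_neg_right {d : ℕ} (x y : Fin d → ℂ) : cInner x (-y) = -cInner x y := by
  simp [cInner, ← Finset.sum_neg_distrib]

lemma mem_innerSet_image {α : Type*} [Fintype α] {d : ℕ} {f : α → Fin d → ℂ}
    (hf : Function.Injective f) {v : ℂ} :
    v ∈ innerSet (univ.image f) ↔ ∃ p q, p ≠ q ∧ cInner (f p) (f q) = v := by
  simp only [innerSet, mem_image, mem_filter, mem_product, Prod.exists]
  constructor
  · rintro ⟨_, _, ⟨⟨⟨p, -, rfl⟩, ⟨q, -, rfl⟩⟩, hpq⟩, rfl⟩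
    exact ⟨p, q, fun h => hpq (congrArg f h), rfl⟩
  · rintro ⟨p, q, hpq, rfl⟩
    exact ⟨f p, f q, ⟨⟨⟨p, mem_univ p, rfl⟩, ⟨q, mem_univ q, rfl⟩⟩, hf.ne hpq⟩, rfl⟩

def signedVec {ι V : Type*} [Neg V] (x : ι → V) (p : ι × Bool) : V :=
  if p.2 then x p.1 else -(x p.1)

section signedVec

variable {ι : Type*} {d : ℕ} {x : ι → Fin d → ℂ}

lemma image_signedVec [Fintype ι] :
    univ.image (signedVec x) = univ.image x ∪ univ.image fun j => -(x j) := by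
  ext v
  simp only [mem_image, mem_union, mem_univ, true_and, Prod.exists, Bool.exists_bool,
    signedVec, Bool.false_eq_true, if_false, if_true, exists_or]
  tauto

lemma sum_image_signedVec [Fintype ι] (hinj : Function.Injective (signedVec x))
    (g : (Fin d → ℂ) → ℂ) :
    ∑ z ∈ univ.image (signedVec x), g z = ∑ j, (g (x j) + g (-(x j))) := by
  rw [sum_image fun p _ q _ h => hinj h, Fintype.sum_prod_type]
  simp [signedVec]

lemma cInner_signedVec_self (hnorm : ∀ j, cInner (x j) (x j) = 1) (p : ι × Bool) :
    cInner (signedVec x p) (signedVec x p) = 1 := by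
  rcases p with ⟨j, _ | _⟩ <;> simp [signedVec, cInner_neg_left, cInner_neg_right, hnorm]

lemma cInner_signedVec_mem {c : ℂ} (hnorm : ∀ j, cInner (x j) (x j) = 1)
    (hoff : ∀ j k, j ≠ k → cInner (x j) (x k) = c ∨ cInner (x j) (x k) = -c)
    {p q : ι × Bool} (hpq : p ≠ q) :
    cInner (signedVec x p) (signedVec x q) ∈ ({c, -c, -1} : Finset ℂ) := by
  obtain ⟨j, s⟩ := p
  obtain ⟨k, t⟩ := q
  rcases eq_or_ne j k with rfl | hjk
  · have hst : s ≠ t := fun h => hpq (by rw [h])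
    cases s <;> cases t <;> simp_all [signedVec, cInner_neg_left, cInner_neg_right]
  · rcases hoff j k hjk with h | h <;>
      cases s <;> cases t <;> simp [signedVec, cInner_neg_left, cInner_neg_right, h]

lemma signedVec_injective {c : ℂ} (hnorm : ∀ j, cInner (x j) (x j) = 1)
    (hoff : ∀ j k, j ≠ k → cInner (x j) (x k) = c ∨ cInner (x j) (x k) = -c)
    (hc₁ : c ≠ 1) (hc₂ : c ≠ -1) : Function.Injective (signedVec x) := by
  intro p q hpq
  by_contra hne
  have h := cInner_signedVec_mem hnorm hoff hne
  rw [← hpq, cInner_signedVec_self hnorm] at h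
  simp only [mem_insert, mem_singleton] at h
  rcases h with h | h | h
  · exact hc₁ h.symm
  · exact hc₂ (neg_eq_iff_eq_neg.mp h.symm)
  · norm_num at h

lemma innerSet_image_signedVec [Fintype ι] {c : ℂ} (hnorm : ∀ j, cInner (x j) (x j) = 1)
    (hoff : ∀ j k, j ≠ k → cInner (x j) (x k) = c ∨ cInner (x j) (x k) = -c)
    (hc₁ : c ≠ 1) (hc₂ : c ≠ -1) {j k : ι} (hjk : j ≠ k)
    (hjkc : cInner (x j) (x k) = c) :
    innerSet (univ.image (signedVec x)) = {c, -c, -1} := by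
  have hinj := signedVec_injective hnorm hoff hc₁ hc₂
  ext v
  rw [mem_innerSet_image hinj]
  constructor
  · rintro ⟨p, q, hpq, rfl⟩
    exact cInner_signedVec_mem hnorm hoff hpq
  · simp only [mem_insert, mem_singleton]
    rintro (rfl | rfl | rfl)
    · exact ⟨(j, true), (k, true), by simp [hjk], by simp [signedVec, hjkc]⟩
    · exact ⟨(j, true), (k, false), by simp [hjk], by simp [signedVec, cInner_neg_right, hjkc]⟩
    · exact ⟨(j, true), (j, false), by simp, by simp [signedVec, cInner_neg_right, hnorm]⟩

end signedVec

lemma card_insert_neg_neg_one {c : ℂ} (hc₀ : c ≠ 0) (hc₁ : c ≠ 1) (hc₂ : c ≠ -1) :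
    ({c, -c, -1} : Finset ℂ).card = 3 :=
  card_eq_three.mpr ⟨c, -c, -1, by simpa [eq_neg_iff_add_eq_zero, ← two_mul] using hc₀, hc₂,
    by simpa using hc₁, rfl⟩

lemma exists_eq_single_add_of_sum_eq_succ {ι : Type*} [Fintype ι] [DecidableEq ι] {a : ι → ℕ}
    {n : ℕ} (h : ∑ i, a i = n + 1) :
    ∃ i, ∃ a' : ι → ℕ, a = Pi.single i 1 + a' ∧ ∑ i, a' i = n := by
  obtain ⟨i, hi⟩ : ∃ i, a i ≠ 0 := by
    by_contra! h0
    simp [h0] at h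
  have ha : a = Pi.single i 1 + (a - Pi.single i 1) := by
    ext j
    rcases eq_or_ne j i with rfl | hji
    · simp only [Pi.add_apply, Pi.sub_apply, Pi.single_eq_same]
      omega
    · simp [Pi.single_eq_of_ne hji]
  refine ⟨i, _, ha, ?_⟩
  rw [ha] at h
  simp only [Pi.add_apply, sum_add_distrib, sum_pi_single', mem_univ, if_true] at h
  omega

lemma prod_pow_single {ι M : Type*} [Fintype ι] [DecidableEq ι] [CommMonoid M] (f : ι → M)
    (i : ι) : ∏ j, f j ^ (Pi.single i 1 : ι → ℕ) j = f i := by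
  rw [Fintype.prod_eq_single i fun j hj => by simp [Pi.single_eq_of_ne hj]]
  simp

def conjMonomial {d : ℕ} (a b : Fin d → ℕ) (z : Fin d → ℂ) : ℂ :=
  (∏ i, z i ^ a i) * ∏ i, (starRingEnd ℂ) (z i) ^ b i

section conjMonomial

variable {d : ℕ} (a b : Fin d → ℕ) (z : Fin d → ℂ)

lemma conjMonomial_neg :
    conjMonomial a b (-z) = (-1) ^ (∑ i, a i + ∑ i, b i) * conjMonomial a b z := by
  simp only [conjMonomial, Pi.neg_apply, map_neg, neg_pow (z _), neg_pow ((starRingEnd ℂ) _),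
    prod_mul_distrib, prod_pow_eq_pow_sum, pow_add]
  ring

@[simp] lemma conjMonomial_zero : conjMonomial (0 : Fin d → ℕ) 0 z = 1 := by
  simp [conjMonomial]

lemma conjMonomial_single_add_left (i : Fin d) :
    conjMonomial (Pi.single i 1 + a) b z = z i * conjMonomial a b z := by
  simp only [conjMonomial, Pi.add_apply, pow_add, prod_mul_distrib, prod_pow_single]
  ring

lemma conjMonomial_single_add_right (i : Fin d) :
    conjMonomial a (Pi.single i 1 + b) z = conjMonomial a b z * (starRingEnd ℂ) (z i) := by
  simp only [conjMonomial, Pi.add_apply, pow_add, prod_mul_distrib, prod_pow_single]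
  ring

end conjMonomial

section monomialAvg

variable {d : ℕ}

lemma monomialAvg_of_sum_ne {a b : Fin d → ℕ} (h : ∑ i, a i ≠ ∑ i, b i) :
    monomialAvg d a b = 0 :=
  if_neg fun hab => h (by rw [hab])

@[simp] lemma monomialAvg_zero : monomialAvg d 0 0 = 1 := by
  simp [monomialAvg, Nat.factorial_ne_zero]

lemma monomialAvg_single (i i' : Fin d) :
    monomialAvg d (Pi.single i 1) (Pi.single i' 1) = if i = i' then (d : ℂ)⁻¹ else 0 := by
  rcases eq_or_ne i i' with rfl | hii'
  · have hfac : ∀ j, ((Pi.single i 1 : Fin d → ℕ) j).factorial = 1 := fun j =>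
      Nat.factorial_eq_one.mpr (by rcases eq_or_ne j i with rfl | h <;> simp [*])
    have hd : (d - 1).factorial ≠ 0 := Nat.factorial_ne_zero _
    simp only [monomialAvg, if_true, hfac, Nat.cast_one, prod_const_one, mul_one, sum_pi_single',
      mem_univ, Nat.add_sub_cancel, ← Nat.mul_factorial_pred i.pos.ne', Nat.cast_mul]
    field_simp
  · have hne : (Pi.single i 1 : Fin d → ℕ) ≠ Pi.single i' 1 := fun h => by
      simpa [Pi.single_eq_of_ne hii'] using congrFun h i
    simp [monomialAvg, hne, hii']

end monomialAvg

section design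

variable {ι : Type*} [Fintype ι] {d : ℕ} {x : ι → Fin d → ℂ}

lemma sum_conjMonomial_image_signedVec (hinj : Function.Injective (signedVec x))
    (a b : Fin d → ℕ) :
    ∑ z ∈ univ.image (signedVec x), conjMonomial a b z
      = (1 + (-1) ^ (∑ i, a i + ∑ i, b i)) * ∑ j, conjMonomial a b (x j) := by
  simp only [sum_image_signedVec hinj, conjMonomial_neg, mul_sum, add_mul, one_mul]

theorem isDesign_image_signedVec (hinj : Function.Injective (signedVec x))
    (hframe : ∀ i i', ∑ j, x j i * (starRingEnd ℂ) (x j i') =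
      if i = i' then (Fintype.card ι / d : ℂ) else 0)
    (hsym : ∀ i i', ∑ j, x j i * x j i' = 0) :
    IsDesign d (univ.image (signedVec x))
      (((range 4) ×ˢ (range 4)).filter fun p => p.1 + p.2 ≤ 3) := by
  rintro ⟨k, l⟩ hkl a b (ha : ∑ i, a i = k) (hb : ∑ i, b i = l)
  have hkl : k + l ≤ 3 := (mem_filter.mp hkl).2
  change ∑ z ∈ _, conjMonomial a b z = _
  rw [sum_conjMonomial_image_signedVec hinj, card_image_of_injective _ hinj, card_univ,
    Fintype.card_prod, Fintype.card_bool, ha, hb]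
  have zero_of_sum {c : Fin d → ℕ} (hc : ∑ i, c i = 0) : c = 0 :=
    funext fun i => sum_eq_zero_iff.mp hc i (mem_univ i)
  rcases (by omega : (k + l) % 2 = 1 ∨ (k = 0 ∧ l = 0) ∨ (k = 1 ∧ l = 1) ∨ (k = 2 ∧ l = 0) ∨
      (k = 0 ∧ l = 2)) with hodd | ⟨rfl, rfl⟩ | ⟨rfl, rfl⟩ | ⟨rfl, rfl⟩ | ⟨rfl, rfl⟩
  · rw [(Nat.odd_iff.mpr hodd).neg_one_pow, monomialAvg_of_sum_ne (by omega)]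
    simp
  · obtain rfl := zero_of_sum ha
    obtain rfl := zero_of_sum hb
    simp only [add_zero, pow_zero, conjMonomial_zero, sum_const, card_univ, nsmul_eq_mul, mul_one,
      Nat.cast_mul, Nat.cast_ofNat, monomialAvg_zero]
    ring
  · obtain ⟨i, a', rfl, ha'⟩ := exists_eq_single_add_of_sum_eq_succ ha
    obtain ⟨i', b', rfl, hb'⟩ := exists_eq_single_add_of_sum_eq_succ hb
    obtain rfl := zero_of_sum ha'
    obtain rfl := zero_of_sum hb'
    simp only [conjMonomial_single_add_left, conjMonomial_single_add_right, conjMonomial_zero,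
      mul_one, hframe]
    rw [add_zero, add_zero, monomialAvg_single]
    split_ifs <;> push_cast <;> ring
  · obtain ⟨i, a', rfl, ha'⟩ := exists_eq_single_add_of_sum_eq_succ ha
    obtain ⟨i', a'', rfl, ha''⟩ := exists_eq_single_add_of_sum_eq_succ ha'
    obtain rfl := zero_of_sum ha''
    obtain rfl := zero_of_sum hb
    rw [monomialAvg_of_sum_ne (by omega)]
    simp only [conjMonomial_single_add_left, conjMonomial_zero, mul_one, hsym]
    simp
  · obtain ⟨i, b', rfl, hb'⟩ := exists_eq_single_add_of_sum_eq_succ hb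
    obtain ⟨i', b'', rfl, hb''⟩ := exists_eq_single_add_of_sum_eq_succ hb'
    obtain rfl := zero_of_sum hb''
    obtain rfl := zero_of_sum ha
    rw [monomialAvg_of_sum_ne (by omega)]
    simp only [conjMonomial_single_add_right, conjMonomial_zero, one_mul, ← map_mul, ← map_sum,
      hsym]
    simp

end design

section confGram

variable {d : ℕ} {C : Matrix (Fin (2 * d)) (Fin (2 * d)) ℝ}

lemma two_mul_sub_one_pos (hd : 1 ≤ d) : (0 : ℝ) < 2 * d - 1 := by
  have : (1 : ℝ) ≤ d := by exact_mod_cast hd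
  linarith

lemma confGram_sub_one_mul_self (hd : 1 ≤ d) (hskew : Cᵀ = -C)
    (hconf : C * Cᵀ = ((2 * (d : ℝ) - 1) : ℝ) • 1) :
    (confGram d C - 1) * (confGram d C - 1) = 1 := by
  have hpos := two_mul_sub_one_pos hd
  have hCC : C * C = -((2 * (d : ℝ) - 1) • 1) := by rw [← hconf, hskew, Matrix.mul_neg, neg_neg]
  have hsqrt : ((Real.sqrt (2 * d - 1) : ℂ)) ^ 2 = ((2 * d - 1 : ℝ) : ℂ) := by
    rw [← Complex.ofReal_pow, Real.sq_sqrt hpos.le]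
  have hmap : (C.map fun r => (r : ℂ)) * C.map (fun r => (r : ℂ)) =
      (C * C).map (fun r => (r : ℂ)) :=
    (Matrix.map_mul (f := Complex.ofRealHom)).symm
  rw [confGram, add_sub_cancel_left, Matrix.smul_mul, Matrix.mul_smul, smul_smul, hmap, hCC]
  ext j k
  rcases eq_or_ne j k with rfl | hjk
  · have hne : (2 * d - 1 : ℂ) ≠ 0 := by exact_mod_cast hpos.ne'
    simp only [Matrix.smul_apply, Matrix.map_apply, Matrix.neg_apply, Matrix.one_apply_eq,
      smul_eq_mul]
    rw [div_mul_div_comm, ← sq, ← sq, Complex.I_sq, hsqrt]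
    push_cast
    field_simp
  · simp [Matrix.one_apply_ne hjk]

lemma confGram_mul_self (hd : 1 ≤ d) (hskew : Cᵀ = -C)
    (hconf : C * Cᵀ = ((2 * (d : ℝ) - 1) : ℝ) • 1) :
    confGram d C * confGram d C = (2 : ℂ) • confGram d C := by
  calc confGram d C * confGram d C
      = (confGram d C - 1) * (confGram d C - 1) + confGram d C + confGram d C - 1 := by
        noncomm_ring
    _ = (2 : ℂ) • confGram d C := by rw [confGram_sub_one_mul_self hd hskew hconf, two_smul]; abel

lemma confGram_transpose (hskew : Cᵀ = -C) : (confGram d C)ᵀ = 2 - confGram d C := by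
  rw [confGram, transpose_add, transpose_one, transpose_smul, ← transpose_map, hskew]
  have hneg : (-C).map (fun r => (r : ℂ)) = -C.map (fun r => (r : ℂ)) := by ext; simp
  rw [hneg, smul_neg, ← one_add_one_eq_two (R := Matrix (Fin (2 * d)) (Fin (2 * d)) ℂ)]
  abel

lemma confGram_mul_transpose (hd : 1 ≤ d) (hskew : Cᵀ = -C)
    (hconf : C * Cᵀ = ((2 * (d : ℝ) - 1) : ℝ) • 1) :
    confGram d C * (confGram d C)ᵀ = 0 := by
  rw [confGram_transpose hskew, mul_sub, confGram_mul_self hd hskew hconf, mul_two, two_smul,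
    sub_self]

lemma confGram_isHermitian (hskew : Cᵀ = -C) : (confGram d C).IsHermitian := by
  have hskew' : ∀ j k, C k j = -C j k := fun j k => by simpa using congrFun (congrFun hskew j) k
  ext j k
  simp only [confGram, conjTranspose_apply, Matrix.add_apply, Matrix.one_apply, eq_comm,
    Matrix.smul_apply, map_apply, hskew' j k, Complex.ofReal_neg, smul_eq_mul, mul_neg, star_add,
    RCLike.star_def, MonoidWithZeroHom.map_ite_one_zero, star_neg, star_mul', star_div₀,
    Complex.conj_I, Complex.conj_ofReal, add_right_inj]
  ring

lemma confGram_trace (hdiag : ∀ j, C j j = 0) : (confGram d C).trace = 2 * d := by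
  simp [confGram, trace, hdiag]

lemma confGram_posSemidef (hd : 1 ≤ d) (hskew : Cᵀ = -C)
    (hconf : C * Cᵀ = ((2 * (d : ℝ) - 1) : ℝ) • 1) : (confGram d C).PosSemidef := by
  have h := (posSemidef_conjTranspose_mul_self (confGram d C)).smul
    (show (0 : ℂ) ≤ 2⁻¹ by norm_num [Complex.nonneg_iff])
  rwa [(confGram_isHermitian hskew).eq, confGram_mul_self hd hskew hconf, smul_smul,
    inv_mul_cancel₀ two_ne_zero, one_smul] at h

lemma confGram_rank (hd : 1 ≤ d) (hdiag : ∀ j, C j j = 0) (hskew : Cᵀ = -C)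
    (hconf : C * Cᵀ = ((2 * (d : ℝ) - 1) : ℝ) • 1) : (confGram d C).rank = d := by
  have hidem : IsIdempotentElem ((2⁻¹ : ℂ) • confGram d C) := by
    rw [IsIdempotentElem, Matrix.smul_mul, Matrix.mul_smul, confGram_mul_self hd hskew hconf,
      smul_smul, smul_smul]
    norm_num
  have h := rank_eq_trace_of_isIdempotentElem hidem
  rw [rank_smul_of_mem_nonZeroDivisors _ (mem_nonZeroDivisors_of_ne_zero (by norm_num)),
    trace_smul, confGram_trace hdiag, smul_eq_mul] at h
  exact_mod_cast h.trans (by ring : (2⁻¹ : ℂ) * (2 * d) = d)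

lemma confGram_apply_self (hdiag : ∀ j, C j j = 0) (j : Fin (2 * d)) : confGram d C j j = 1 := by
  simp [confGram, hdiag]

lemma confGram_apply_of_ne {j k : Fin (2 * d)} (hjk : j ≠ k) :
    confGram d C j k = Complex.I / (Real.sqrt (2 * (d : ℝ) - 1) : ℂ) * C j k := by
  simp [confGram, one_apply_ne hjk]

lemma exists_ne_apply_eq_one_of_skew (hd : 1 ≤ d) (hoff : ∀ j k, j ≠ k → C j k = 1 ∨ C j k = -1)
    (hskew : Cᵀ = -C) : ∃ j k, j ≠ k ∧ C j k = 1 := by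
  have h01 : (⟨0, by omega⟩ : Fin (2 * d)) ≠ ⟨1, by omega⟩ := by simp
  rcases hoff _ _ h01 with h | h
  · exact ⟨_, _, h01, h⟩
  · refine ⟨_, _, h01.symm, ?_⟩
    simpa [h] using congrFun (congrFun hskew ⟨0, by omega⟩) ⟨1, by omega⟩

end confGram

lemma of_mul_conjTranspose_eq_transpose {ι : Type*} [Fintype ι] {d : ℕ} {x : ι → Fin d → ℂ}
    {G : Matrix ι ι ℂ} (hx : ∀ j k, cInner (x j) (x k) = G j k) :
    of x * (of x)ᴴ = Gᵀ := by
  ext j k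
  simp [← hx, cInner, mul_apply, mul_comm]

section gram

variable {d : ℕ} {C : Matrix (Fin (2 * d)) (Fin (2 * d)) ℝ} {x : Fin (2 * d) → Fin d → ℂ}

lemma sum_mul_conj_of_cInner_eq_confGram (hd : 1 ≤ d) (hdiag : ∀ j, C j j = 0)
    (hskew : Cᵀ = -C) (hconf : C * Cᵀ = ((2 * (d : ℝ) - 1) : ℝ) • 1)
    (hx : ∀ j k, cInner (x j) (x k) = confGram d C j k) (i i' : Fin d) :
    ∑ j, x j i * (starRingEnd ℂ) (x j i') = if i = i' then 2 else 0 := by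
  have hG := of_mul_conjTranspose_eq_transpose hx
  have hframe := conjTranspose_mul_self_eq_smul_one (P := of x) (r := 2)
    (by rw [hG, ← transpose_mul, confGram_mul_self hd hskew hconf, transpose_smul]; norm_num)
    (by rw [hG, trace_transpose, confGram_trace hdiag]; simp)
  have h := congrFun (congrFun hframe i') i
  simp only [mul_apply, conjTranspose_apply, of_apply, RCLike.star_def, Complex.coe_algebraMap,
    Complex.ofReal_ofNat, Matrix.smul_apply, one_apply, smul_eq_mul, mul_ite, mul_one,
    mul_zero] at h
  simp_rw [mul_comm (x _ i), h, eq_comm (a := i')]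

lemma sum_mul_of_cInner_eq_confGram (hd : 1 ≤ d) (hskew : Cᵀ = -C)
    (hconf : C * Cᵀ = ((2 * (d : ℝ) - 1) : ℝ) • 1)
    (hx : ∀ j k, cInner (x j) (x k) = confGram d C j k) (i i' : Fin d) :
    ∑ j, x j i * x j i' = 0 := by
  have hG := of_mul_conjTranspose_eq_transpose hx
  have hsym := transpose_mul_self_eq_zero (P := of x)
    (by rw [hG, transpose_transpose, confGram_mul_transpose hd hskew hconf])
  simpa [mul_apply] using congrFun (congrFun hsym i) i'

lemma cInner_eq_or_eq_neg_of_cInner_eq_confGram (hoff : ∀ j k, j ≠ k → C j k = 1 ∨ C j k = -1)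
    (hx : ∀ j k, cInner (x j) (x k) = confGram d C j k) (j k : Fin (2 * d)) (hjk : j ≠ k) :
    cInner (x j) (x k) = Complex.I / (Real.sqrt (2 * (d : ℝ) - 1) : ℂ) ∨
      cInner (x j) (x k) = -(Complex.I / (Real.sqrt (2 * (d : ℝ) - 1) : ℂ)) := by
  rw [hx, confGram_apply_of_ne hjk]
  rcases hoff j k hjk with h | h <;> simp [h]

end gram

/-- from a `2d × 2d` skew-symmetric conference matrix `C`, the
matrix `A = I + (i/√(2d−1))C` is positive semidefinite of rank `d`, and any
Gram realization `x₁,…,x_{2d}` of `A` yields, together with the negatives, `4d`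
pairwise distinct vectors forming a `{(k,l) : k+l ≤ 3}`-design with inner
product set `{i/√(2d−1), −i/√(2d−1), −1}` of cardinality `3`. -/
theorem stmt_18 {d : ℕ} (hd : 1 ≤ d) (C : Matrix (Fin (2 * d)) (Fin (2 * d)) ℝ)
    (hdiag : ∀ j, C j j = 0)
    (hoff : ∀ j k, j ≠ k → C j k = 1 ∨ C j k = -1)
    (hskew : Cᵀ = -C)
    (hconf : C * Cᵀ = ((2 * (d : ℝ) - 1) : ℝ) • 1) :
    (confGram d C).PosSemidef ∧ (confGram d C).rank = d ∧
    ∀ x : Fin (2 * d) → Fin d → ℂ,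
      (∀ j k, cInner (x j) (x k) = confGram d C j k) →
      Function.Injective (fun p : Fin (2 * d) × Bool =>
        if p.2 then x p.1 else -(x p.1)) ∧
      IsDesign d ((Finset.univ.image x) ∪ (Finset.univ.image fun j => -(x j)))
        (((Finset.range 4) ×ˢ (Finset.range 4)).filter fun p => p.1 + p.2 ≤ 3) ∧
      innerSet ((Finset.univ.image x) ∪ (Finset.univ.image fun j => -(x j))) =
        {Complex.I / (Real.sqrt (2 * (d : ℝ) - 1) : ℂ),
         -(Complex.I / (Real.sqrt (2 * (d : ℝ) - 1) : ℂ)), -1} ∧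
      (innerSet ((Finset.univ.image x) ∪ (Finset.univ.image fun j => -(x j)))).card = 3 := by
  refine ⟨confGram_posSemidef hd hskew hconf, confGram_rank hd hdiag hskew hconf, fun x hx => ?_⟩
  set c : ℂ := Complex.I / (Real.sqrt (2 * (d : ℝ) - 1) : ℂ)
  have hre : c.re = 0 := by simp [c, Complex.div_ofReal_re]
  have hc₀ : c ≠ 0 := div_ne_zero Complex.I_ne_zero
    (Complex.ofReal_ne_zero.mpr (Real.sqrt_pos.mpr (two_mul_sub_one_pos hd)).ne')
  have hc₁ : c ≠ 1 := fun h => by simp [h] at hre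
  have hc₂ : c ≠ -1 := fun h => by simp [h] at hre
  have hnorm : ∀ j, cInner (x j) (x j) = 1 := fun j => by rw [hx, confGram_apply_self hdiag]
  have hxoff := cInner_eq_or_eq_neg_of_cInner_eq_confGram hoff hx
  have hinj := signedVec_injective hnorm hxoff hc₁ hc₂
  obtain ⟨j, k, hjk, hC⟩ := exists_ne_apply_eq_one_of_skew hd hoff hskew
  have hIS := innerSet_image_signedVec hnorm hxoff hc₁ hc₂ hjk
    (by rw [hx, confGram_apply_of_ne hjk, hC]; simp)
  rw [← image_signedVec]
  refine ⟨hinj, isDesign_image_signedVec hinj (fun i i' => ?_)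
    (sum_mul_of_cInner_eq_confGram hd hskew hconf hx), hIS, ?_⟩
  · rw [sum_mul_conj_of_cInner_eq_confGram hd hdiag hskew hconf hx, Fintype.card_fin]
    have : (d : ℂ) ≠ 0 := by exact_mod_cast (by omega : d ≠ 0)
    push_cast
    field_simp
  · rw [hIS, card_insert_neg_neg_one hc₀ hc₁ hc₂]
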